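/- arXiv:1507.07160 — 6 statements merged into one kernel-verified Lean document; each statement's English description precedes it below -/
import Mathlib

section
/- Let V : [0,∞) → [0,∞) solve V'(t) = -μ(V(t)) with μ continuous, μ(0)=0, μ(v)>0 for v>0. If T := ∫₀^∞ 1/μ(v) dv < ∞, then for every initial value V(0) ≥ 0 (arbitrarily large), V(t) = 0 for all t ≥ T. That is, the settling time is bounded by T uniformly in the initial condition (fixed-time stability). -/
/-!
Separation of variables: while the solution stays positive, `1 / μ (V s) * V' s = -1`, so the
substitution `v = V s` gives `t = ∫ v in V t..V 0, 1 / μ v`. If `V t > 0` this integral is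
strictly smaller than `T = ∫ v in Ioi 0, 1 / μ v`, since it omits the positive piece over
`(0, V t)`; hence `V t > 0` forces `t < T`, whatever `V 0` is.
-/

open MeasureTheory Set

lemma antitoneOn_Ici_of_hasDerivAt_nonpos {f f' : ℝ → ℝ} {a : ℝ}
    (hf : ∀ x ≥ a, HasDerivAt f (f' x) x) (hf' : ∀ x ≥ a, f' x ≤ 0) :
    AntitoneOn f (Ici a) := by
  refine antitoneOn_of_hasDerivWithinAt_nonpos (f' := f') (convex_Ici a)
    (fun x hx => (hf x hx).continuousAt.continuousWithinAt) (fun x hx => ?_) (fun x hx => ?_)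
  all_goals rw [interior_Ici] at hx
  · exact (hf x hx.le).hasDerivWithinAt
  · exact hf' x hx.le

lemma integral_one_div_eq_of_hasDerivAt_neg {V μ : ℝ → ℝ} {a b : ℝ} (hab : a ≤ b)
    (hode : ∀ s ∈ Icc a b, HasDerivAt V (-μ (V s)) s)
    (hμ : ContinuousOn μ (V '' Icc a b)) (hne : ∀ s ∈ Icc a b, μ (V s) ≠ 0) :
    ∫ v in V b..V a, 1 / μ v = b - a := by
  have hV : ContinuousOn V (Icc a b) := fun s hs => (hode s hs).continuousAt.continuousWithinAt
  have hg : ContinuousOn (fun v => 1 / μ v) (V '' Icc a b) :=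
    continuousOn_const.div hμ (by rintro _ ⟨s, hs, rfl⟩; exact hne s hs)
  have hsubst := intervalIntegral.integral_comp_mul_deriv' (a := a) (b := b) (f := V)
    (f' := fun s => -μ (V s)) (g := fun v => 1 / μ v)
  rw [uIcc_of_le hab] at hsubst
  have hminus_one :
      EqOn (fun s => ((fun v => 1 / μ v) ∘ V) s * -μ (V s)) (fun _ => -1) (uIcc a b) := by
    intro s hs
    rw [uIcc_of_le hab] at hs
    simp only [Function.comp_apply]
    field_simp [hne s hs]
  rw [intervalIntegral.integral_symm, ← hsubst hode (hμ.comp hV (mapsTo_image _ _)).neg hg,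
    intervalIntegral.integral_congr hminus_one]
  simp

lemma intervalIntegral_lt_setIntegral_Ioi {f : ℝ → ℝ} {a w u : ℝ} (hf : IntegrableOn f (Ioi a))
    (hpos : ∀ x > a, 0 < f x) (haw : a < w) (hwu : w ≤ u) :
    ∫ x in w..u, f x < ∫ x in Ioi a, f x := by
  have hint : ∀ x ≥ a, IntervalIntegrable f volume a x := fun x hx =>
    (intervalIntegrable_iff_integrableOn_Ioc_of_le hx).2 (hf.mono_set Ioc_subset_Ioi_self)
  have hhead : 0 < ∫ x in a..w, f x :=
    intervalIntegral.intervalIntegral_pos_of_pos_on (hint w haw.le) (fun x hx => hpos x hx.1) haw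
  have hwhole : ∫ x in a..u, f x ≤ ∫ x in Ioi a, f x := by
    rw [intervalIntegral.integral_of_le (haw.le.trans hwu)]
    exact setIntegral_mono_set hf
      ((ae_restrict_iff' measurableSet_Ioi).2 (ae_of_all _ fun x hx => (hpos x hx).le))
      Ioc_subset_Ioi_self.eventuallyLE
  rw [← intervalIntegral.integral_interval_sub_left (hint u (haw.le.trans hwu)) (hint w haw.le)]
  linarith

theorem fixed_time_stability
    (V μ : ℝ → ℝ)
    (hμc : Continuous μ) (hμ0 : μ 0 = 0)
    (hμpos : ∀ v > (0:ℝ), 0 < μ v)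
    (hVnn : ∀ t ≥ (0:ℝ), 0 ≤ V t)
    (hode : ∀ t ≥ (0:ℝ), HasDerivAt V (-(μ (V t))) t)
    (hint : IntegrableOn (fun v => 1 / μ v) (Set.Ioi 0))
    (T : ℝ) (hT : T = ∫ v in Set.Ioi 0, 1 / μ v) :
    ∀ t ≥ T, V t = 0 := by
  intro t ht
  have hT0 : 0 ≤ T :=
    hT ▸ setIntegral_nonneg measurableSet_Ioi fun v hv => (one_div_pos.2 (hμpos v hv)).le
  have ht0 : 0 ≤ t := hT0.trans ht
  by_contra hne
  have hVt : 0 < V t := (hVnn t ht0).lt_of_ne' hne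
  have hanti : AntitoneOn V (Ici 0) := antitoneOn_Ici_of_hasDerivAt_nonpos hode fun s hs => by
    rcases (hVnn s hs).eq_or_lt with h | h
    · rw [← h, hμ0, neg_zero]
    · exact neg_nonpos.2 (hμpos _ h).le
  have hVpos : ∀ s ∈ Icc 0 t, 0 < V s := fun s hs => hVt.trans_le (hanti hs.1 ht0 hs.2)
  have htime : ∫ v in V t..V 0, 1 / μ v = t - 0 :=
    integral_one_div_eq_of_hasDerivAt_neg ht0 (fun s hs => hode s hs.1) hμc.continuousOn
      fun s hs => (hμpos _ (hVpos s hs)).ne'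
  have hlt := intervalIntegral_lt_setIntegral_Ioi hint (fun v hv => one_div_pos.2 (hμpos v hv))
    hVt (hanti self_mem_Ici ht0 ht0)
  linarith
end

section
/- Let a > 0 and μ₁, μ₂ : [0,∞) → [0,∞) be continuous with μ₁(0) = 0, μ₁(v) > 0 for 0 < v < a, μ₂(v) > 0 for v ≥ a, ω₁ := ∫₀^a dv/μ₁(v) < ∞ and ω₂ := ∫_a^∞ dv/μ₂(v) < ∞. Suppose V : [0,∞) → [0,∞) is absolutely continuous and satisfies V'(t) ≤ -μ₁(V(t)) whenever 0 < V(t) < a and V'(t) ≤ -μ₂(V(t)) whenever V(t) ≥ a. Then V(t) = 0 for all t ≥ ω₁ + ω₂, regardless of the initial value V(0). -/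
/-!
Along a trajectory on which `V' ≤ -μ (V)` with `μ (V) > 0`, the quantity `t + ∫^{V t} 1/μ` is
nonincreasing, so the time needed to travel from one level to a lower one is at most the integral
of `1/μ` between the two levels. The trajectory is nonincreasing, and strictly decreasing while it
is positive; hence it spends less than `ω₂` time above `a` and, once at or below `a`, less than
`ω₁` time before reaching `0`.
-/

open MeasureTheory Set

lemma intervalIntegral_lt_setIntegral_of_pos {f : ℝ → ℝ} {S : Set ℝ} {p x y : ℝ}
    (hS : MeasurableSet S) (hf : IntegrableOn f S) (hnn : ∀ v ∈ S, 0 ≤ f v)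
    (hpos : ∀ v ∈ Ioo p x, 0 < f v) (hpx : p < x) (hxy : x ≤ y) (hsub : Ioc p y ⊆ S) :
    ∫ v in x..y, f v < ∫ v in S, f v := by
  have hint : ∀ {b c : ℝ}, p ≤ b → b ≤ c → c ≤ y → IntervalIntegrable f volume b c :=
    fun hb hbc hc => (intervalIntegrable_iff_integrableOn_Ioc_of_le hbc).2
      (hf.mono_set ((Ioc_subset_Ioc hb hc).trans hsub))
  have hhead : 0 < ∫ v in p..x, f v :=
    intervalIntegral.intervalIntegral_pos_of_pos_on (hint le_rfl hpx.le hxy) hpos hpx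
  have hsplit : (∫ v in p..x, f v) + ∫ v in x..y, f v = ∫ v in p..y, f v :=
    intervalIntegral.integral_add_adjacent_intervals (hint le_rfl hpx.le hxy)
      (hint hpx.le hxy le_rfl)
  have hmono : ∫ v in p..y, f v ≤ ∫ v in S, f v := by
    rw [intervalIntegral.integral_of_le (hpx.le.trans hxy)]
    exact setIntegral_mono_set hf ((ae_restrict_iff' hS).2 (Filter.Eventually.of_forall hnn))
      hsub.eventuallyLE
  linarith

lemma sub_le_intervalIntegral_inv_of_hasDerivAt_le_neg {μ V V' : ℝ → ℝ} {u w : ℝ}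
    (hμc : Continuous μ) (huw : u ≤ w) (hVc : ContinuousOn V (Icc u w))
    (hV : AntitoneOn V (Icc u w))
    (hint : IntervalIntegrable (fun v => 1 / μ v) volume (V w) (V u))
    (hd : ∀ t ∈ Ioo u w, HasDerivAt V (V' t) t) (hpos : ∀ t ∈ Ioo u w, 0 < μ (V t))
    (hdec : ∀ t ∈ Ioo u w, V' t ≤ -μ (V t)) :
    w - u ≤ ∫ v in V w..V u, 1 / μ v := by
  have hwu : V w ≤ V u := hV (left_mem_Icc.2 huw) (right_mem_Icc.2 huw) huw
  set F : ℝ → ℝ := fun x => ∫ v in V w..x, 1 / μ v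
  have hmaps : MapsTo V (Icc u w) (uIcc (V w) (V u)) := fun t ht => by
    rw [uIcc_of_le hwu]
    exact ⟨hV ht (right_mem_Icc.2 huw) ht.2, hV (left_mem_Icc.2 huw) ht ht.1⟩
  have hFc : ContinuousOn F (uIcc (V w) (V u)) :=
    intervalIntegral.continuousOn_primitive_interval' hint left_mem_uIcc
  have hderiv : ∀ t ∈ Ioo u w, HasDerivAt (fun s => s + F (V s)) (1 + 1 / μ (V t) * V' t) t := by
    intro t ht
    have hmem := hmaps (Ioo_subset_Icc_self ht)
    have hF : HasDerivAt F (1 / μ (V t)) (V t) :=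
      intervalIntegral.integral_hasDerivAt_right (hint.mono_set (uIcc_subset_uIcc_left hmem))
        (measurable_const.div hμc.measurable).aestronglyMeasurable.stronglyMeasurableAtFilter
        (continuousAt_const.div hμc.continuousAt (hpos t ht).ne')
    exact (hasDerivAt_id t).add (hF.comp t (hd t ht))
  have hslope : ∀ t ∈ Ioo u w, 1 + 1 / μ (V t) * V' t ≤ 0 := by
    intro t ht
    have hμt := hpos t ht
    have : 1 / μ (V t) * V' t ≤ 1 / μ (V t) * -μ (V t) :=
      mul_le_mul_of_nonneg_left (hdec t ht) (by positivity)
    rw [mul_neg, one_div_mul_cancel hμt.ne'] at this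
    linarith
  have hanti : AntitoneOn (fun s => s + F (V s)) (Icc u w) := by
    refine antitoneOn_of_hasDerivWithinAt_nonpos (f' := fun t => 1 + 1 / μ (V t) * V' t)
      (convex_Icc u w)
      (continuousOn_id.add (hFc.comp hVc hmaps)) (fun t ht => ?_) (fun t ht => ?_)
    · rw [interior_Icc] at ht ⊢
      exact (hderiv t ht).hasDerivWithinAt
    · rw [interior_Icc] at ht
      exact hslope t ht
  have hend := hanti (left_mem_Icc.2 huw) (right_mem_Icc.2 huw) huw
  have hFw : F (V w) = 0 := intervalIntegral.integral_same
  simp only [hFw] at hend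
  linarith

lemma sub_lt_setIntegral_inv_of_hasDerivAt_le_neg {μ V V' : ℝ → ℝ} {S : Set ℝ} {u w p : ℝ}
    (hμc : Continuous μ) (hS : MeasurableSet S) (hint : IntegrableOn (fun v => 1 / μ v) S)
    (hμnn : ∀ v ∈ S, 0 ≤ μ v) (hμpos : ∀ v ∈ Ioo p (V u), 0 < μ v)
    (huw : u ≤ w) (hV : StrictAntiOn V (Icc u w))
    (hd : ∀ t ∈ Icc u w, HasDerivAt V (V' t) t) (hdec : ∀ t ∈ Ioo u w, V' t ≤ -μ (V t))
    (hpw : p < V w) (hsub : Ioc p (V u) ⊆ S) :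
    w - u < ∫ v in S, 1 / μ v := by
  have hwu : V w ≤ V u := hV.antitoneOn (left_mem_Icc.2 huw) (right_mem_Icc.2 huw) huw
  have hlevel : ∀ t ∈ Ioo u w, V t ∈ Ioo p (V u) := fun t ht =>
    ⟨hpw.trans (hV (Ioo_subset_Icc_self ht) (right_mem_Icc.2 huw) ht.2),
      hV (left_mem_Icc.2 huw) (Ioo_subset_Icc_self ht) ht.1⟩
  have htime := sub_le_intervalIntegral_inv_of_hasDerivAt_le_neg hμc huw
    (fun t ht => (hd t ht).continuousAt.continuousWithinAt) hV.antitoneOn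
    ((intervalIntegrable_iff_integrableOn_Ioc_of_le hwu).2
      (hint.mono_set ((Ioc_subset_Ioc_left hpw.le).trans hsub)))
    (fun t ht => hd t (Ioo_subset_Icc_self ht)) (fun t ht => hμpos _ (hlevel t ht)) hdec
  have hbound := intervalIntegral_lt_setIntegral_of_pos hS hint
    (fun v hv => one_div_nonneg.2 (hμnn v hv))
    (fun v hv => one_div_pos.2 (hμpos v ⟨hv.1, hv.2.trans_le hwu⟩)) hpw hwu hsub
  linarith

/-- At a zero in `(0, ∞)`, `V` has a local minimum, so its derivative vanishes there. -/
lemma antitoneOn_Ici_of_nonneg_of_deriv_nonpos_of_pos {V V' : ℝ → ℝ}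
    (hVnn : ∀ t ≥ (0 : ℝ), 0 ≤ V t) (hd : ∀ t ≥ (0 : ℝ), HasDerivAt V (V' t) t)
    (hneg : ∀ t > (0 : ℝ), 0 < V t → V' t ≤ 0) : AntitoneOn V (Ici 0) := by
  refine antitoneOn_of_hasDerivWithinAt_nonpos (f' := V') (convex_Ici 0)
    (fun t ht => (hd t ht).continuousAt.continuousWithinAt) (fun t ht => ?_) (fun t ht => ?_)
  · rw [interior_Ici] at ht ⊢
    exact (hd t (le_of_lt ht)).hasDerivWithinAt
  · rw [interior_Ici] at ht
    rcases (hVnn t (le_of_lt ht)).eq_or_lt with hzero | hpos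
    · have hmin : IsLocalMin V t := Filter.mem_of_superset (Ioi_mem_nhds ht)
        fun s hs => hzero ▸ hVnn s (le_of_lt hs)
      exact (hmin.hasDerivAt_eq_zero (hd t (le_of_lt ht))).le
    · exact hneg t ht hpos

lemma strictAntiOn_Icc_of_deriv_neg_of_pos {V V' : ℝ → ℝ} {T : ℝ}
    (hd : ∀ t ≥ (0 : ℝ), HasDerivAt V (V' t) t) (hanti : AntitoneOn V (Ici 0))
    (hneg : ∀ t ≥ (0 : ℝ), 0 < V t → V' t < 0) (hT : 0 ≤ T) (hVT : 0 < V T) :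
    StrictAntiOn V (Icc 0 T) := by
  refine strictAntiOn_of_hasDerivWithinAt_neg (f' := V') (convex_Icc 0 T)
    (fun t ht => (hd t ht.1).continuousAt.continuousWithinAt) (fun t ht => ?_) (fun t ht => ?_)
  all_goals rw [interior_Icc] at ht
  · exact (hd t ht.1.le).hasDerivWithinAt
  · exact hneg t ht.1.le (hVT.trans_le (hanti ht.1.le hT ht.2.le))

theorem piecewise_fixed_time_stability_general
    (a : ℝ)
    (μ₁ μ₂ : ℝ → ℝ) (hμ₁c : Continuous μ₁) (hμ₂c : Continuous μ₂)
    (hμ₁pos : ∀ v, 0 < v → v < a → 0 < μ₁ v)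
    (hμ₂pos : ∀ v, a ≤ v → 0 < μ₂ v)
    (hμ₁nn : ∀ v ≥ (0:ℝ), 0 ≤ μ₁ v)
    (hint₁ : IntegrableOn (fun v => 1 / μ₁ v) (Set.Ioc 0 a))
    (hint₂ : IntegrableOn (fun v => 1 / μ₂ v) (Set.Ioi a))
    (ω₁ ω₂ : ℝ)
    (hω₁ : ω₁ = ∫ v in Set.Ioc 0 a, 1 / μ₁ v)
    (hω₂ : ω₂ = ∫ v in Set.Ioi a, 1 / μ₂ v)
    (V V' : ℝ → ℝ) (hVnn : ∀ t ≥ (0:ℝ), 0 ≤ V t)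
    (hd : ∀ t ≥ (0:ℝ), HasDerivAt V (V' t) t)
    (h1 : ∀ t ≥ (0:ℝ), 0 < V t → V t < a → V' t ≤ -μ₁ (V t))
    (h2 : ∀ t ≥ (0:ℝ), a ≤ V t → V' t ≤ -μ₂ (V t)) :
    ∀ t ≥ ω₁ + ω₂, V t = 0 := by
  have hneg : ∀ t ≥ (0 : ℝ), 0 < V t → V' t < 0 := fun t ht hV => by
    rcases lt_or_ge (V t) a with hlt | hge
    · linarith [h1 t ht hV hlt, hμ₁pos _ hV hlt]
    · linarith [h2 t ht hge, hμ₂pos _ hge]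
  have hanti := antitoneOn_Ici_of_nonneg_of_deriv_nonpos_of_pos hVnn hd
    fun t ht hV => (hneg t (le_of_lt ht) hV).le
  have hω₁nn : 0 ≤ ω₁ := hω₁ ▸ setIntegral_nonneg measurableSet_Ioc
    fun v hv => one_div_nonneg.2 (hμ₁nn v hv.1.le)
  have hω₂nn : 0 ≤ ω₂ := hω₂ ▸ setIntegral_nonneg measurableSet_Ioi
    fun v hv => (one_div_pos.2 (hμ₂pos v hv.le)).le
  intro t₀ ht₀
  by_contra hne
  have ht₀0 : 0 ≤ t₀ := by linarith
  have hVt₀ : 0 < V t₀ := (hVnn t₀ ht₀0).lt_of_ne' hne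
  have hstrict := strictAntiOn_Icc_of_deriv_neg_of_pos hd hanti hneg ht₀0 hVt₀
  have hω₂t₀ : ω₂ ≤ t₀ := by linarith
  have hVω₂ : V ω₂ ≤ a := by
    by_contra! habove
    have hlevel : ∀ t ∈ Ioo 0 ω₂, a ≤ V t := fun t ht =>
      habove.le.trans (hanti ht.1.le hω₂nn ht.2.le)
    have := sub_lt_setIntegral_inv_of_hasDerivAt_le_neg hμ₂c measurableSet_Ioi hint₂
      (fun v hv => (hμ₂pos v hv.le).le) (fun v hv => hμ₂pos v hv.1.le) hω₂nn
      (hstrict.mono (Icc_subset_Icc_right hω₂t₀)) (fun t ht => hd t ht.1) (fun t ht => h2 t ht.1.le (hlevel t ht)) habove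
      Ioc_subset_Ioi_self
    linarith
  have hlevel : ∀ t ∈ Ioo ω₂ t₀, 0 < V t ∧ V t < a := fun t ht =>
    ⟨hVt₀.trans (hstrict ⟨hω₂nn.trans ht.1.le, ht.2.le⟩ ⟨ht₀0, le_rfl⟩ ht.2),
      (hstrict ⟨hω₂nn, hω₂t₀⟩ ⟨hω₂nn.trans ht.1.le, ht.2.le⟩ ht.1).trans_le hVω₂⟩
  have := sub_lt_setIntegral_inv_of_hasDerivAt_le_neg hμ₁c measurableSet_Ioc hint₁
    (fun v hv => hμ₁nn v hv.1.le) (fun v hv => hμ₁pos v hv.1 (hv.2.trans_le hVω₂)) hω₂t₀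
    (hstrict.mono (Icc_subset_Icc_left hω₂nn)) (fun t ht => hd t (hω₂nn.trans ht.1))
    (fun t ht => h1 t (hω₂nn.trans ht.1.le) (hlevel t ht).1 (hlevel t ht).2) hVt₀
    (Ioc_subset_Ioc_right hVω₂)
  linarith

theorem piecewise_fixed_time_stability
    (a : ℝ) (ha : 0 < a)
    (μ₁ μ₂ : ℝ → ℝ) (hμ₁c : Continuous μ₁) (hμ₂c : Continuous μ₂)
    (hμ₁0 : μ₁ 0 = 0)
    (hμ₁pos : ∀ v, 0 < v → v < a → 0 < μ₁ v)
    (hμ₂pos : ∀ v, a ≤ v → 0 < μ₂ v)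
    (hμ₁nn : ∀ v ≥ (0:ℝ), 0 ≤ μ₁ v) (hμ₂nn : ∀ v ≥ (0:ℝ), 0 ≤ μ₂ v)
    (hint₁ : IntegrableOn (fun v => 1 / μ₁ v) (Set.Ioc 0 a))
    (hint₂ : IntegrableOn (fun v => 1 / μ₂ v) (Set.Ioi a))
    (ω₁ ω₂ : ℝ)
    (hω₁ : ω₁ = ∫ v in Set.Ioc 0 a, 1 / μ₁ v)
    (hω₂ : ω₂ = ∫ v in Set.Ioi a, 1 / μ₂ v)
    (V V' : ℝ → ℝ) (hVnn : ∀ t ≥ (0:ℝ), 0 ≤ V t)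
    (hd : ∀ t ≥ (0:ℝ), HasDerivAt V (V' t) t)
    (h1 : ∀ t ≥ (0:ℝ), 0 < V t → V t < a → V' t ≤ -μ₁ (V t))
    (h2 : ∀ t ≥ (0:ℝ), a ≤ V t → V' t ≤ -μ₂ (V t)) :
    ∀ t ≥ ω₁ + ω₂, V t = 0 :=
  piecewise_fixed_time_stability_general a μ₁ μ₂ hμ₁c hμ₂c hμ₁pos hμ₂pos hμ₁nn hint₁ hint₂ ω₁ ω₂ hω₁
    hω₂ V V' hVnn hd h1 h2
end

section
/- Let μ : [0,∞) → [0,∞) be continuous, positive on (0,∞), with μ(0)=0, and suppose v ↦ v/μ(v) is monotone increasing on (0,∞). Let V : [0,∞) → [0,∞) be absolutely continuous with V(0) > 0 satisfying V'(t) ≤ 2δ V(t) - c μ(V(t)) for constants δ ≥ 0, c > 0 with c > 2δ · V(0)/μ(V(0)). Then V'(t) ≤ -(c - 2δ V(0)/μ(V(0))) μ(V(t)) for all t, and consequently V(t) = 0 for all t ≥ (c - 2δ V(0)/μ(V(0)))^{-1} ∫₀^{V(0)} dv/μ(v), provided this integral is finite. -/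
/-!
Since `v ↦ v / μ v` is increasing, `2δ V ≤ 2δ (V₀ / μ V₀) μ(V)` as long as `V ≤ V₀`, which turns
the differential inequality into `V' ≤ -ε μ(V)` with `ε = c - 2δ V₀ / μ V₀ > 0`. In particular
`V' < 0` whenever `V = V₀`, so `V` can never rise above `V₀` and the bound holds for all times.
With `G v = ∫₀ᵛ dv / μ v`, the function `G(V t) + ε t` is then nonincreasing while `V > 0`, so
`ε t < G(V₀)` as long as `V t > 0`.
-/

open MeasureTheory Set

lemma antitoneOn_of_hasDerivAt_nonpos {D : Set ℝ} (hD : Convex ℝ D) {f f' : ℝ → ℝ}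
    (hf : ∀ x ∈ D, HasDerivAt f (f' x) x) (hf'₀ : ∀ x ∈ D, f' x ≤ 0) : AntitoneOn f D :=
  antitoneOn_of_hasDerivWithinAt_nonpos hD (fun x hx => (hf x hx).continuousAt.continuousWithinAt)
    (fun x hx => (hf x (interior_subset hx)).hasDerivWithinAt)
    (fun x hx => hf'₀ x (interior_subset hx))

lemma le_of_hasDerivAt_neg_of_eq {f f' : ℝ → ℝ} {M : ℝ} (hf : ∀ t ≥ (0:ℝ), HasDerivAt f (f' t) t)
    (h0 : f 0 ≤ M) (hM : ∀ t ≥ (0:ℝ), f t = M → f' t < 0) : ∀ t ≥ (0:ℝ), f t ≤ M := fun _ hs =>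
  image_le_of_deriv_right_lt_deriv_boundary (B := fun _ => M) (B' := fun _ => 0)
    (fun x hx => (hf x hx.1).continuousAt.continuousWithinAt)
    (fun x hx => (hf x hx.1).hasDerivWithinAt) h0 (fun _ => hasDerivAt_const _ _)
    (fun x hx => hM x hx.1) ⟨hs, le_rfl⟩

section

variable {μ : ℝ → ℝ}

lemma mu_nonneg (hμ0 : μ 0 = 0) (hμpos : ∀ v > (0:ℝ), 0 < μ v) {v : ℝ} (hv : 0 ≤ v) :
    0 ≤ μ v := by
  rcases hv.eq_or_lt with rfl | hv
  · exact hμ0.ge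
  · exact (hμpos v hv).le

lemma le_div_mul_of_div_le (hμ0 : μ 0 = 0) (hμpos : ∀ v > (0:ℝ), 0 < μ v)
    (hratio : ∀ u v : ℝ, 0 < u → u ≤ v → u / μ u ≤ v / μ v) {V₀ x : ℝ}
    (hx : 0 ≤ x) (hxV : x ≤ V₀) : x ≤ V₀ / μ V₀ * μ x := by
  rcases hx.eq_or_lt with rfl | hx
  · simp [hμ0]
  · exact (div_le_iff₀ (hμpos x hx)).1 (hratio x V₀ hx hxV)

lemma drift_le_neg_mul (hμ0 : μ 0 = 0) (hμpos : ∀ v > (0:ℝ), 0 < μ v)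
    (hratio : ∀ u v : ℝ, 0 < u → u ≤ v → u / μ u ≤ v / μ v) {V₀ x δ c : ℝ}
    (hδ : 0 ≤ δ) (hx : 0 ≤ x) (hxV : x ≤ V₀) :
    2 * δ * x - c * μ x ≤ -(c - 2 * δ * (V₀ / μ V₀)) * μ x := by
  have := mul_le_mul_of_nonneg_left (le_div_mul_of_div_le hμ0 hμpos hratio hx hxV)
    (by positivity : (0:ℝ) ≤ 2 * δ)
  linarith

lemma hasDerivAt_integral_one_div (hμc : Continuous μ) (hμpos : ∀ v > (0:ℝ), 0 < μ v)
    {V₀ v : ℝ} (hint : IntegrableOn (fun v => 1 / μ v) (Ioc 0 V₀)) (hv : 0 < v) (hvV : v ≤ V₀) :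
    HasDerivAt (fun w => ∫ x in (0:ℝ)..w, 1 / μ x) (1 / μ v) v :=
  intervalIntegral.integral_hasDerivAt_right
    ((intervalIntegrable_iff_integrableOn_Ioc_of_le hv.le).2
      (hint.mono_set (Ioc_subset_Ioc_right hvV)))
    (hμc.measurable.const_div 1).stronglyMeasurable.stronglyMeasurableAtFilter
    (continuousAt_const.div hμc.continuousAt (hμpos v hv).ne')

lemma mul_le_integral_sub_integral (hμc : Continuous μ) (hμpos : ∀ v > (0:ℝ), 0 < μ v)
    {ε : ℝ} {V V' : ℝ → ℝ}
    (hd : ∀ t ≥ (0:ℝ), HasDerivAt V (V' t) t) (hdec : ∀ t ≥ (0:ℝ), V' t ≤ -ε * μ (V t))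
    (hint : IntegrableOn (fun v => 1 / μ v) (Ioc 0 (V 0))) (hanti : AntitoneOn V (Ici 0))
    {t : ℝ} (ht : 0 ≤ t) (hVt : 0 < V t) :
    ε * t ≤ (∫ x in (0:ℝ)..V 0, 1 / μ x) - ∫ x in (0:ℝ)..V t, 1 / μ x := by
  have hVpos : ∀ u ∈ Icc 0 t, 0 < V u := fun u hu =>
    hVt.trans_le (hanti hu.1 ht hu.2)
  have hderiv : ∀ u ∈ Icc 0 t, HasDerivAt (fun w => (∫ x in (0:ℝ)..V w, 1 / μ x) + ε * w)
      (1 / μ (V u) * V' u + ε) u := fun u hu => by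
    have hcomp : HasDerivAt (fun w => ∫ x in (0:ℝ)..V w, 1 / μ x) (1 / μ (V u) * V' u) u :=
      (hasDerivAt_integral_one_div hμc hμpos hint (hVpos u hu)
        (hanti self_mem_Ici hu.1 hu.1)).comp u (hd u hu.1)
    have hsum := hcomp.add ((hasDerivAt_id' u).const_mul ε)
    rwa [mul_one] at hsum
  have hg := antitoneOn_of_hasDerivAt_nonpos (convex_Icc 0 t) hderiv fun u hu => by
    have hrate : V' u / μ (V u) ≤ -ε := (div_le_iff₀ (hμpos _ (hVpos u hu))).2 (hdec u hu.1)
    rw [one_div_mul_eq_div]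
    linarith
  have hgt := hg ⟨le_rfl, ht⟩ ⟨ht, le_rfl⟩ ht
  simp only [mul_zero, add_zero] at hgt
  linarith

theorem eq_zero_of_hasDerivAt_le_neg_mul (hμc : Continuous μ) (hμ0 : μ 0 = 0)
    (hμpos : ∀ v > (0:ℝ), 0 < μ v) {ε : ℝ} (hε : 0 < ε) {V V' : ℝ → ℝ}
    (hVnn : ∀ t ≥ (0:ℝ), 0 ≤ V t) (hd : ∀ t ≥ (0:ℝ), HasDerivAt V (V' t) t)
    (hdec : ∀ t ≥ (0:ℝ), V' t ≤ -ε * μ (V t))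
    (hint : IntegrableOn (fun v => 1 / μ v) (Ioc 0 (V 0))) :
    ∀ t ≥ ε⁻¹ * ∫ v in Ioc 0 (V 0), 1 / μ v, V t = 0 := by
  intro t ht
  set I := ∫ v in Ioc 0 (V 0), 1 / μ v
  have hanti : AntitoneOn V (Ici 0) :=
    antitoneOn_of_hasDerivAt_nonpos (convex_Ici 0) hd fun u hu =>
      (hdec u hu).trans <| by nlinarith [mu_nonneg hμ0 hμpos (hVnn u hu)]
  have hI : 0 ≤ I :=
    setIntegral_nonneg measurableSet_Ioc fun v hv => (one_div_pos.2 (hμpos v hv.1)).le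
  have ht0 : 0 ≤ t := (mul_nonneg (inv_nonneg.2 hε.le) hI).trans ht
  refine le_antisymm (not_lt.1 fun hVt => ?_) (hVnn t ht0)
  have hdecay := mul_le_integral_sub_integral hμc hμpos hd hdec hint hanti ht0 hVt
  rw [intervalIntegral.integral_of_le (hVnn 0 le_rfl)] at hdecay
  have hGt : 0 < ∫ x in (0:ℝ)..V t, 1 / μ x :=
    intervalIntegral.intervalIntegral_pos_of_pos_on
      ((intervalIntegrable_iff_integrableOn_Ioc_of_le hVt.le).2
        (hint.mono_set (Ioc_subset_Ioc_right (hanti self_mem_Ici ht0 ht0))))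
      (fun x hx => one_div_pos.2 (hμpos x hx.1)) hVt
  have hεt : I ≤ ε * t := by
    simpa only [mul_inv_cancel_left₀ hε.ne'] using mul_le_mul_of_nonneg_left ht hε.le
  linarith

end

theorem finite_time_with_drift_general
    (μ : ℝ → ℝ) (hμc : Continuous μ) (hμ0 : μ 0 = 0)
    (hμpos : ∀ v > (0:ℝ), 0 < μ v)
    (hratio : ∀ u v : ℝ, 0 < u → u ≤ v → u / μ u ≤ v / μ v)
    (δ c : ℝ) (hδ : 0 ≤ δ)
    (hdom : 2 * δ * (V₀ / μ V₀) < c)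
    (V V' : ℝ → ℝ) (hV0 : V 0 = V₀) (hV0pos : 0 < V₀)
    (hVnn : ∀ t ≥ (0:ℝ), 0 ≤ V t)
    (hd : ∀ t ≥ (0:ℝ), HasDerivAt V (V' t) t)
    (hineq : ∀ t ≥ (0:ℝ), V' t ≤ 2 * δ * V t - c * μ (V t)) :
    (∀ t ≥ (0:ℝ), V' t ≤ -(c - 2 * δ * (V₀ / μ V₀)) * μ (V t)) ∧
    (IntegrableOn (fun v => 1 / μ v) (Set.Ioc 0 V₀) →
      ∀ t ≥ (c - 2 * δ * (V₀ / μ V₀))⁻¹ * ∫ v in Set.Ioc 0 V₀, 1 / μ v,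
        V t = 0) := by
  set ε := c - 2 * δ * (V₀ / μ V₀)
  have hε : 0 < ε := sub_pos.2 hdom
  have hrate : ∀ t ≥ (0:ℝ), V t ≤ V₀ → V' t ≤ -ε * μ (V t) := fun t ht hle =>
    (hineq t ht).trans (drift_le_neg_mul hμ0 hμpos hratio hδ (hVnn t ht) hle)
  have hle : ∀ t ≥ (0:ℝ), V t ≤ V₀ :=
    le_of_hasDerivAt_neg_of_eq hd hV0.le fun t ht hVt => (hrate t ht hVt.le).trans_lt <| by
      rw [hVt]; exact mul_neg_of_neg_of_pos (neg_neg_of_pos hε) (hμpos V₀ hV0pos)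
  have hdec : ∀ t ≥ (0:ℝ), V' t ≤ -ε * μ (V t) := fun t ht => hrate t ht (hle t ht)
  refine ⟨hdec, fun hint => ?_⟩
  subst hV0
  exact eq_zero_of_hasDerivAt_le_neg_mul hμc hμ0 hμpos hε hVnn hd hdec hint

theorem finite_time_with_drift
    (μ : ℝ → ℝ) (hμc : Continuous μ) (hμ0 : μ 0 = 0)
    (hμpos : ∀ v > (0:ℝ), 0 < μ v)
    (hratio : ∀ u v : ℝ, 0 < u → u ≤ v → u / μ u ≤ v / μ v)
    (δ c : ℝ) (hδ : 0 ≤ δ) (hc : 0 < c)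
    (hdom : 2 * δ * (V₀ / μ V₀) < c)
    (V V' : ℝ → ℝ) (hV0 : V 0 = V₀) (hV0pos : 0 < V₀)
    (hVnn : ∀ t ≥ (0:ℝ), 0 ≤ V t)
    (hd : ∀ t ≥ (0:ℝ), HasDerivAt V (V' t) t)
    (hineq : ∀ t ≥ (0:ℝ), V' t ≤ 2 * δ * V t - c * μ (V t)) :
    (∀ t ≥ (0:ℝ), V' t ≤ -(c - 2 * δ * (V₀ / μ V₀)) * μ (V t)) ∧
    (IntegrableOn (fun v => 1 / μ v) (Set.Ioc 0 V₀) →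
      ∀ t ≥ (c - 2 * δ * (V₀ / μ V₀))⁻¹ * ∫ v in Set.Ioc 0 V₀, 1 / μ v,
        V t = 0) :=
  finite_time_with_drift_general μ hμc hμ0 hμpos hratio δ c hδ hdom V V' hV0 hV0pos hVnn hd hineq
end

section
/- Let ν : [0,∞) → [0,∞) be continuous and positive on (0,∞) with v ↦ v/ν(v) monotone decreasing on (0,∞), and ∫₁^∞ dv/ν(v) < ∞. Suppose V : [0,∞) → [0,∞) is absolutely continuous with V(0) > 1 and V'(t) ≤ 2δ V(t) - c ν(V(t)) whenever V(t) ≥ 1, where c > 2δ/ν(1). Then V(t*) ≤ 1 for t* = (c - 2δ/ν(1))^{-1} ∫₁^∞ dv/ν(v), uniformly in V(0). -/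
open MeasureTheory Set

/-!
While `V ≥ 1`, the quantity `F (V t) + κ t`, with `F x = ∫₁ˣ dv / ν v` (`recipIntegral ν`) and
`κ = c - 2δ / ν 1`, is non-increasing: `d/dt F (V t) = V' / ν V ≤ 2δ · V / ν V - c ≤ 2δ / ν 1 - c`
because `V / ν V` decreases. Starting from the last time `s` at which `V = 1` (or from `0`),
`F (V s) + κ s` is at most `∫₁^∞ dv / ν v = κ t*`, so `V (t*) > 1` would force `F (V t*) ≤ 0`.
-/

theorem exists_forall_Icc_le_of_le_right {f : ℝ → ℝ} {a b y : ℝ} (hab : a ≤ b)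
    (hf : ContinuousOn f (Icc a b)) (hb : y ≤ f b) :
    ∃ s ∈ Icc a b, (s = a ∨ f s = y) ∧ ∀ t ∈ Icc s b, y ≤ f t := by
  set S := Icc a b ∩ f ⁻¹' Iic y
  rcases S.eq_empty_or_nonempty with hS | hS
  · exact ⟨a, left_mem_Icc.2 hab, Or.inl rfl, fun t ht =>
      le_of_not_ge fun hty => hS.subset ⟨ht, hty⟩⟩
  have hSc : IsCompact S := isCompact_Icc.of_isClosed_subset
    (hf.preimage_isClosed_of_isClosed isClosed_Icc isClosed_Iic) inter_subset_left
  obtain ⟨s, hsS, hs_max⟩ := hSc.exists_isGreatest hS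
  have hsb : s ≤ b := hsS.1.2
  have hgt : ∀ t ∈ Ioc s b, y < f t := fun t ht =>
    lt_of_not_ge fun hty => (hs_max ⟨⟨hsS.1.1.trans ht.1.le, ht.2⟩, hty⟩).not_gt ht.1
  -- `s` is the last time with `f ≤ y`; the intermediate value theorem on `[s, b]` gives `f s = y`.
  obtain ⟨u, hu, hfu⟩ := intermediate_value_Icc hsb (hf.mono (Icc_subset_Icc_left hsS.1.1))
    ⟨hsS.2, hb⟩
  have hus : u = s := le_antisymm (hs_max ⟨⟨hsS.1.1.trans hu.1, hu.2⟩, hfu.le⟩) hu.1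
  rw [hus] at hfu
  refine ⟨s, hsS.1, Or.inr hfu, fun t ht => ?_⟩
  rcases ht.1.eq_or_lt with rfl | hst
  · exact hfu.ge
  · exact (hgt t ⟨hst, ht.2⟩).le

section recipIntegral

variable {ν : ℝ → ℝ}

noncomputable def recipIntegral (ν : ℝ → ℝ) (x : ℝ) : ℝ := ∫ v in (1 : ℝ)..x, 1 / ν v

@[simp]
theorem recipIntegral_one : recipIntegral ν 1 = 0 := intervalIntegral.integral_same

theorem continuousOn_one_div_of_pos (hνc : ContinuousOn ν (Ioi 0))
    (hνpos : ∀ v > (0 : ℝ), 0 < ν v) : ContinuousOn (fun v => 1 / ν v) (Ioi 0) :=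
  continuousOn_const.div hνc fun v hv => (hνpos v hv).ne'

theorem intervalIntegrable_one_div_of_pos (hνc : ContinuousOn ν (Ioi 0))
    (hνpos : ∀ v > (0 : ℝ), 0 < ν v) {x : ℝ} (hx : 0 < x) :
    IntervalIntegrable (fun v => 1 / ν v) volume 1 x :=
  ((continuousOn_one_div_of_pos hνc hνpos).mono
    fun _ hv => lt_of_lt_of_le (lt_min one_pos hx) hv.1).intervalIntegrable

theorem hasDerivAt_recipIntegral (hνc : ContinuousOn ν (Ioi 0))
    (hνpos : ∀ v > (0 : ℝ), 0 < ν v) {x : ℝ} (hx : 0 < x) :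
    HasDerivAt (recipIntegral ν) (1 / ν x) x :=
  intervalIntegral.integral_hasDerivAt_right (intervalIntegrable_one_div_of_pos hνc hνpos hx)
    ((continuousOn_one_div_of_pos hνc hνpos).stronglyMeasurableAtFilter isOpen_Ioi x hx)
    ((continuousOn_one_div_of_pos hνc hνpos).continuousAt (Ioi_mem_nhds hx))

theorem recipIntegral_pos (hνc : ContinuousOn ν (Ioi 0)) (hνpos : ∀ v > (0 : ℝ), 0 < ν v)
    {x : ℝ} (hx : 1 < x) : 0 < recipIntegral ν x :=
  intervalIntegral.intervalIntegral_pos_of_pos_on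
    (intervalIntegrable_one_div_of_pos hνc hνpos (one_pos.trans hx))
    (fun v hv => one_div_pos.2 (hνpos v (one_pos.trans hv.1))) hx

theorem recipIntegral_le_integral_Ioi (hνpos : ∀ v > (1 : ℝ), 0 < ν v)
    (hint : IntegrableOn (fun v => 1 / ν v) (Ioi 1)) {x : ℝ} (hx : 1 ≤ x) :
    recipIntegral ν x ≤ ∫ v in Ioi 1, 1 / ν v := by
  rw [recipIntegral, intervalIntegral.integral_of_le hx]
  refine setIntegral_mono_set hint ?_ Ioc_subset_Ioi_self.eventuallyLE
  filter_upwards [ae_restrict_mem measurableSet_Ioi] with v hv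
  exact (one_div_pos.2 (hνpos v hv)).le

theorem div_le_neg_sub_of_le {δ c x y : ℝ} (hδ : 0 ≤ δ) (hνx : 0 < ν x)
    (hratio : x / ν x ≤ 1 / ν 1) (hy : y ≤ 2 * δ * x - c * ν x) :
    y / ν x ≤ -(c - 2 * δ / ν 1) :=
  calc y / ν x ≤ (2 * δ * x - c * ν x) / ν x := div_le_div_of_nonneg_right hy hνx.le
    _ = 2 * δ * (x / ν x) - c := by field_simp
    _ ≤ 2 * δ * (1 / ν 1) - c := by gcongr
    _ = -(c - 2 * δ / ν 1) := by ring

theorem recipIntegral_sub_le_of_one_le {V V' : ℝ → ℝ} {δ c a b : ℝ}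
    (hνc : ContinuousOn ν (Ioi 0)) (hνpos : ∀ v > (0 : ℝ), 0 < ν v)
    (hratio : ∀ v ≥ (1 : ℝ), v / ν v ≤ 1 / ν 1) (hδ : 0 ≤ δ) (hab : a ≤ b)
    (hd : ∀ t ∈ Icc a b, HasDerivAt V (V' t) t)
    (hineq : ∀ t ∈ Icc a b, V' t ≤ 2 * δ * V t - c * ν (V t))
    (hge : ∀ t ∈ Icc a b, 1 ≤ V t) :
    recipIntegral ν (V b) - recipIntegral ν (V a) ≤ -(c - 2 * δ / ν 1) * (b - a) := by
  have hW : ∀ t ∈ Icc a b, HasDerivAt (fun s => recipIntegral ν (V s)) (1 / ν (V t) * V' t) t :=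
    fun t ht => (hasDerivAt_recipIntegral hνc hνpos (one_pos.trans_le (hge t ht))).comp t (hd t ht)
  refine (convex_Icc a b).image_sub_le_mul_sub_of_deriv_le
    (fun t ht => (hW t ht).continuousAt.continuousWithinAt) (fun t ht => ?_) (fun t ht => ?_)
    a (left_mem_Icc.2 hab) b (right_mem_Icc.2 hab) hab
  all_goals rw [interior_Icc] at ht; replace ht := Ioo_subset_Icc_self ht
  · exact (hW t ht).differentiableAt.differentiableWithinAt
  · rw [(hW t ht).deriv, one_div_mul_eq_div]
    exact div_le_neg_sub_of_le hδ (hνpos _ (one_pos.trans_le (hge t ht)))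
      (hratio _ (hge t ht)) (hineq t ht)

end recipIntegral

theorem fixed_time_large_values_phase_general
    (ν : ℝ → ℝ) (hνc : Continuous ν)
    (hνpos : ∀ v > (0:ℝ), 0 < ν v)
    (hratio : ∀ u v : ℝ, 0 < u → u ≤ v → v / ν v ≤ u / ν u)
    (hint : IntegrableOn (fun v => 1 / ν v) (Set.Ioi 1))
    (δ c : ℝ) (hδ : 0 ≤ δ) (hc : 2 * δ / ν 1 < c)
    (V V' : ℝ → ℝ)
    (hd : ∀ t ≥ (0:ℝ), HasDerivAt V (V' t) t)
    (hineq : ∀ t ≥ (0:ℝ), 1 ≤ V t → V' t ≤ 2 * δ * V t - c * ν (V t))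
    (tstar : ℝ)
    (htstar : tstar = (c - 2 * δ / ν 1)⁻¹ * ∫ v in Set.Ioi 1, 1 / ν v) :
    V tstar ≤ 1 := by
  have hνpos₁ : ∀ v > (1 : ℝ), 0 < ν v := fun v hv => hνpos v (one_pos.trans hv)
  have hκ : 0 < c - 2 * δ / ν 1 := sub_pos.2 hc
  have hκtstar : (c - 2 * δ / ν 1) * tstar = ∫ v in Ioi 1, 1 / ν v := by
    rw [htstar, mul_inv_cancel_left₀ hκ.ne']
  have htstar_nonneg : 0 ≤ tstar := by
    have h := recipIntegral_le_integral_Ioi hνpos₁ hint le_rfl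
    rw [recipIntegral_one, ← hκtstar] at h
    exact (mul_nonneg_iff_of_pos_left hκ).1 h
  by_contra! hlt
  obtain ⟨s, hs, hs_start, hge⟩ := exists_forall_Icc_le_of_le_right htstar_nonneg
    (fun t ht => (hd t ht.1).continuousAt.continuousWithinAt) hlt.le
  have hdecay := recipIntegral_sub_le_of_one_le hνc.continuousOn hνpos
    (fun v hv => hratio 1 v one_pos hv) hδ hs.2 (fun t ht => hd t (hs.1.trans ht.1))
    (fun t ht => hineq t (hs.1.trans ht.1) (hge t ht)) hge
  have hstart : recipIntegral ν (V s) ≤ (c - 2 * δ / ν 1) * (tstar - s) := by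
    rcases hs_start with rfl | hVs
    · rw [sub_zero, hκtstar]
      exact recipIntegral_le_integral_Ioi hνpos₁ hint (hge 0 ⟨le_rfl, htstar_nonneg⟩)
    · rw [hVs, recipIntegral_one]
      exact mul_nonneg hκ.le (sub_nonneg.2 hs.2)
  linarith [recipIntegral_pos hνc.continuousOn hνpos hlt]

theorem fixed_time_large_values_phase
    (ν : ℝ → ℝ) (hνc : Continuous ν)
    (hνpos : ∀ v > (0:ℝ), 0 < ν v)
    (hratio : ∀ u v : ℝ, 0 < u → u ≤ v → v / ν v ≤ u / ν u)
    (hint : IntegrableOn (fun v => 1 / ν v) (Set.Ioi 1))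
    (δ c : ℝ) (hδ : 0 ≤ δ) (hc : 2 * δ / ν 1 < c)
    (V V' : ℝ → ℝ) (hVnn : ∀ t ≥ (0:ℝ), 0 ≤ V t) (hV0 : 1 < V 0)
    (hd : ∀ t ≥ (0:ℝ), HasDerivAt V (V' t) t)
    (hineq : ∀ t ≥ (0:ℝ), 1 ≤ V t → V' t ≤ 2 * δ * V t - c * ν (V t))
    (tstar : ℝ)
    (htstar : tstar = (c - 2 * δ / ν 1)⁻¹ * ∫ v in Set.Ioi 1, 1 / ν v) :
    V tstar ≤ 1 :=
  fixed_time_large_values_phase_general ν hνc hνpos hratio hint δ c hδ hc V V' hd hineq tstar htstar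
end

section
/- Let V : [0,∞) → [0,∞) be absolutely continuous and satisfy V'(t) ≤ -α V(t)^p for 0 < V(t) < 1 and V'(t) ≤ -β V(t)^q for V(t) ≥ 1, where α, β > 0, 0 < p < 1 < q. Then V(t) = 0 for all t ≥ 1/(α(1-p)) + 1/(β(q-1)), uniformly in V(0). -/
/-! If `V' ≤ -c V ^ r` with `r ≠ 1`, then `V ^ (1 - r) / (1 - r) + c t` is nonincreasing, since its
derivative is `V' V ^ (-r) + c ≤ 0`. For `r = q > 1` this bounds the time spent in `V ≥ 1` by
`1 / (β (q - 1))`, because `V ^ (1 - q)` is positive and at most `1` there; for `r = p < 1` it bounds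
the time spent in `0 < V ≤ 1` by `1 / (α (1 - p))`, because `V ^ (1 - p)` is positive and at most
`1` there. As `V` is nonincreasing (`V' < 0` where `V > 0`, and the zeros of `V ≥ 0` are minima),
the phase `V ≥ 1` precedes the phase `0 < V < 1`, and `V` stays `0` once both are over. -/

open Set Real

theorem HasDerivAt.rpow_one_sub_div {f : ℝ → ℝ} {f' r x : ℝ} (hf : HasDerivAt f f' x)
    (hx : 0 < f x) (hr : r ≠ 1) :
    HasDerivAt (fun y => f y ^ (1 - r) / (1 - r)) (f' * f x ^ (-r)) x := by
  refine ((hf.rpow_const (p := 1 - r) (Or.inl hx.ne')).div_const (1 - r)).congr_deriv ?_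
  rw [show 1 - r - 1 = -r by ring]
  field_simp [sub_ne_zero.2 hr.symm]

theorem antitoneOn_rpow_one_sub_div_add_mul {f f' : ℝ → ℝ} {r c : ℝ} {s : Set ℝ}
    (hs : Convex ℝ s) (hf : ContinuousOn f s) (hf' : ∀ x ∈ interior s, HasDerivAt f (f' x) x)
    (hpos : ∀ x ∈ s, 0 < f x) (hr : r ≠ 1) (hdecay : ∀ x ∈ interior s, f' x ≤ -c * f x ^ r) :
    AntitoneOn (fun x => f x ^ (1 - r) / (1 - r) + c * x) s := by
  have hderiv : ∀ x ∈ interior s,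
      HasDerivAt (fun x => f x ^ (1 - r) / (1 - r) + c * x) (f' x * f x ^ (-r) + c * 1) x :=
    fun x hx => ((hf' x hx).rpow_one_sub_div (hpos x (interior_subset hx)) hr).add
      ((hasDerivAt_id x).const_mul c)
  refine antitoneOn_of_hasDerivWithinAt_nonpos hs ?_ (fun x hx => (hderiv x hx).hasDerivWithinAt)
    fun x hx => ?_
  · exact ((hf.rpow_const fun x hx => Or.inl (hpos x hx).ne').div_const _).add
      (continuousOn_const.mul continuousOn_id)
  · have hfx := hpos x (interior_subset hx)
    have hcancel : f x ^ r * f x ^ (-r) = 1 := by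
      rw [rpow_neg hfx.le, mul_inv_cancel₀ (rpow_pos_of_pos hfx r).ne']
    have := mul_le_mul_of_nonneg_right (hdecay x hx) (rpow_pos_of_pos hfx (-r)).le
    rw [mul_assoc, hcancel] at this
    linarith

theorem sub_lt_of_deriv_le_neg_mul_rpow_of_one_le {f f' : ℝ → ℝ} {a b c q : ℝ} (hab : a ≤ b)
    (hc : 0 < c) (hq : 1 < q) (hf : ContinuousOn f (Icc a b))
    (hf' : ∀ x ∈ Ioo a b, HasDerivAt f (f' x) x) (hdecay : ∀ x ∈ Ioo a b, f' x ≤ -c * f x ^ q)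
    (hpos : ∀ x ∈ Icc a b, 0 < f x) (hb : 1 ≤ f b) :
    b - a < 1 / (c * (q - 1)) := by
  have hanti : f b ^ (1 - q) / (1 - q) + c * b ≤ f a ^ (1 - q) / (1 - q) + c * a :=
    antitoneOn_rpow_one_sub_div_add_mul (convex_Icc a b) hf (by rwa [interior_Icc]) hpos
      hq.ne' (by rwa [interior_Icc]) (left_mem_Icc.2 hab) (right_mem_Icc.2 hab) hab
  have hq' : 0 < q - 1 := by linarith
  have hbound : c * (b - a) * (q - 1) ≤ f b ^ (1 - q) - f a ^ (1 - q) := by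
    have h1q : 1 - q < 0 := by linarith
    rw [div_add' _ _ _ h1q.ne, div_add' _ _ _ h1q.ne, div_le_div_right_of_neg h1q] at hanti
    linarith
  have ha : 0 < f a ^ (1 - q) := rpow_pos_of_pos (hpos a (left_mem_Icc.2 hab)) _
  have hb' : f b ^ (1 - q) ≤ 1 := rpow_le_one_of_one_le_of_nonpos hb (by linarith)
  rw [lt_div_iff₀ (by positivity)]
  linarith

theorem sub_lt_of_deriv_le_neg_mul_rpow_of_le_one {f f' : ℝ → ℝ} {a b c p : ℝ} (hab : a ≤ b)
    (hc : 0 < c) (hp : p < 1) (hf : ContinuousOn f (Icc a b))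
    (hf' : ∀ x ∈ Ioo a b, HasDerivAt f (f' x) x) (hdecay : ∀ x ∈ Ioo a b, f' x ≤ -c * f x ^ p)
    (hpos : ∀ x ∈ Icc a b, 0 < f x) (ha : f a ≤ 1) :
    b - a < 1 / (c * (1 - p)) := by
  have hanti : f b ^ (1 - p) / (1 - p) + c * b ≤ f a ^ (1 - p) / (1 - p) + c * a :=
    antitoneOn_rpow_one_sub_div_add_mul (convex_Icc a b) hf (by rwa [interior_Icc]) hpos
      hp.ne (by rwa [interior_Icc]) (left_mem_Icc.2 hab) (right_mem_Icc.2 hab) hab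
  have hp' : 0 < 1 - p := by linarith
  have hbound : c * (b - a) * (1 - p) ≤ f a ^ (1 - p) - f b ^ (1 - p) := by
    rw [div_add' _ _ _ hp'.ne', div_add' _ _ _ hp'.ne', div_le_div_iff_of_pos_right hp'] at hanti
    linarith
  have ha' : f a ^ (1 - p) ≤ 1 := rpow_le_one (hpos a (left_mem_Icc.2 hab)).le ha hp'.le
  have hb : 0 < f b ^ (1 - p) := rpow_pos_of_pos (hpos b (right_mem_Icc.2 hab)) _
  rw [lt_div_iff₀ (by positivity)]
  linarith

theorem antitoneOn_Ici_of_deriv_nonpos_of_pos {f f' : ℝ → ℝ} {a : ℝ} (hnn : ∀ t ≥ a, 0 ≤ f t)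
    (hd : ∀ t ≥ a, HasDerivAt f (f' t) t) (hneg : ∀ t > a, 0 < f t → f' t ≤ 0) :
    AntitoneOn f (Ici a) := by
  refine antitoneOn_of_hasDerivWithinAt_nonpos (convex_Ici a)
    (fun t ht => (hd t ht).continuousAt.continuousWithinAt)
    (fun t ht => (hd t (interior_subset ht)).hasDerivWithinAt) fun t ht => ?_
  rw [interior_Ici] at ht
  rcases (hnn t ht.le).lt_or_eq with hpos | hzero
  · exact hneg t ht hpos
  · have hmin : IsLocalMin f t :=
      Filter.mem_of_superset (Ioi_mem_nhds ht) fun s hs => hzero ▸ hnn s (le_of_lt hs)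
    exact (hmin.hasDerivAt_eq_zero (hd t ht.le)).le

theorem lt_one_of_deriv_le_neg_mul_rpow {f f' : ℝ → ℝ} {a c q : ℝ} (hc : 0 < c) (hq : 1 < q)
    (hanti : AntitoneOn f (Ici a)) (hd : ∀ t ≥ a, HasDerivAt f (f' t) t)
    (hdecay : ∀ t ≥ a, 1 ≤ f t → f' t ≤ -c * f t ^ q) :
    f (a + 1 / (c * (q - 1))) < 1 := by
  set b := a + 1 / (c * (q - 1))
  have hab : a ≤ b := le_add_of_nonneg_right (one_div_pos.2 (mul_pos hc (by linarith))).le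
  by_contra! hb
  have hge : ∀ x ∈ Icc a b, 1 ≤ f x := fun x hx => hb.trans (hanti hx.1 hab hx.2)
  have := sub_lt_of_deriv_le_neg_mul_rpow_of_one_le hab hc hq
    (fun x hx => (hd x hx.1).continuousAt.continuousWithinAt) (fun x hx => hd x hx.1.le)
    (fun x hx => hdecay x hx.1.le (hge x (Ioo_subset_Icc_self hx)))
    (fun x hx => one_pos.trans_le (hge x hx)) hb
  simp only [b, add_sub_cancel_left, lt_self_iff_false] at this

theorem eq_zero_of_deriv_le_neg_mul_rpow {f f' : ℝ → ℝ} {a c p : ℝ} (hc : 0 < c) (hp : p < 1)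
    (hnn : ∀ t ≥ a, 0 ≤ f t) (hanti : AntitoneOn f (Ici a))
    (hd : ∀ t ≥ a, HasDerivAt f (f' t) t)
    (hdecay : ∀ t ≥ a, 0 < f t → f t < 1 → f' t ≤ -c * f t ^ p) (ha : f a < 1) :
    f (a + 1 / (c * (1 - p))) = 0 := by
  set b := a + 1 / (c * (1 - p))
  have hab : a ≤ b := le_add_of_nonneg_right (one_div_pos.2 (mul_pos hc (by linarith))).le
  by_contra hne
  have hpos : ∀ x ∈ Icc a b, 0 < f x := fun x hx =>
    ((hnn b hab).lt_of_ne' hne).trans_le (hanti hx.1 hab hx.2)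
  have hlt : ∀ x ∈ Icc a b, f x < 1 := fun x hx => (hanti self_mem_Ici hx.1 hx.1).trans_lt ha
  have := sub_lt_of_deriv_le_neg_mul_rpow_of_le_one hab hc hp
    (fun x hx => (hd x hx.1).continuousAt.continuousWithinAt) (fun x hx => hd x hx.1.le)
    (fun x hx => hdecay x hx.1.le (hpos x (Ioo_subset_Icc_self hx))
      (hlt x (Ioo_subset_Icc_self hx))) hpos ha.le
  simp only [b, add_sub_cancel_left, lt_self_iff_false] at this

theorem power_fixed_time_stability_general
    (α β p q : ℝ) (hα : 0 < α) (hβ : 0 < β)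
    (hp1 : p < 1) (hq : 1 < q)
    (V V' : ℝ → ℝ) (hVnn : ∀ t ≥ (0:ℝ), 0 ≤ V t)
    (hd : ∀ t ≥ (0:ℝ), HasDerivAt V (V' t) t)
    (h1 : ∀ t ≥ (0:ℝ), 0 < V t → V t < 1 → V' t ≤ -α * (V t) ^ p)
    (h2 : ∀ t ≥ (0:ℝ), 1 ≤ V t → V' t ≤ -β * (V t) ^ q) :
    ∀ t ≥ 1 / (α * (1 - p)) + 1 / (β * (q - 1)), V t = 0 := by
  have hanti : AntitoneOn V (Ici 0) := by
    refine antitoneOn_Ici_of_deriv_nonpos_of_pos hVnn hd fun t ht hpos => ?_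
    rcases lt_or_ge (V t) 1 with hlt | hge
    · nlinarith [h1 t ht.le hpos hlt, rpow_pos_of_pos hpos p]
    · nlinarith [h2 t ht.le hge, rpow_pos_of_pos hpos q]
  set Tp := 1 / (α * (1 - p))
  set Tq := 1 / (β * (q - 1))
  have hTp : 0 ≤ Tp := (one_div_pos.2 (mul_pos hα (by linarith))).le
  have hTq : 0 ≤ Tq := (one_div_pos.2 (mul_pos hβ (by linarith))).le
  have hT : 0 ≤ Tq + Tp := add_nonneg hTq hTp
  have hV_Tq : V Tq < 1 := by
    simpa only [zero_add] using lt_one_of_deriv_le_neg_mul_rpow hβ hq hanti hd h2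
  have hV_T : V (Tq + Tp) = 0 :=
    eq_zero_of_deriv_le_neg_mul_rpow hα hp1 (fun t ht => hVnn t (hTq.trans ht))
      (hanti.mono (Ici_subset_Ici.2 hTq)) (fun t ht => hd t (hTq.trans ht))
      (fun t ht => h1 t (hTq.trans ht)) hV_Tq
  intro t ht
  have hTt : Tq + Tp ≤ t := by linarith
  exact le_antisymm (hV_T ▸ hanti hT (hT.trans hTt) hTt) (hVnn t (hT.trans hTt))

theorem power_fixed_time_stability
    (α β p q : ℝ) (hα : 0 < α) (hβ : 0 < β)
    (hp0 : 0 < p) (hp1 : p < 1) (hq : 1 < q)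
    (V V' : ℝ → ℝ) (hVnn : ∀ t ≥ (0:ℝ), 0 ≤ V t)
    (hd : ∀ t ≥ (0:ℝ), HasDerivAt V (V' t) t)
    (h1 : ∀ t ≥ (0:ℝ), 0 < V t → V t < 1 → V' t ≤ -α * (V t) ^ p)
    (h2 : ∀ t ≥ (0:ℝ), 1 ≤ V t → V' t ≤ -β * (V t) ^ q) :
    ∀ t ≥ 1 / (α * (1 - p)) + 1 / (β * (q - 1)), V t = 0 :=
  power_fixed_time_stability_general α β p q hα hβ hp1 hq V V' hVnn hd h1 h2
end

section
/- Let f : ℝⁿ → ℝⁿ satisfy the one-sided Lipschitz condition (u-v)ᵀ(f(u)-f(v)) ≤ δ (u-v)ᵀ(u-v) for all u,v ∈ ℝⁿ and some δ > 0. Let x₁,…,x_N : [0,∞) → ℝⁿ be differentiable, x*(t) their average, and suppose ẋᵢ = f(xᵢ) + gᵢ(t) where Σᵢ gᵢ(t) = 0. Then the derivative of V(t) = (1/2)Σᵢ‖xᵢ(t)-x*(t)‖² satisfies V̇(t) ≤ 2δ V(t) + Σᵢ (xᵢ - x*)ᵀ gᵢ(t). -/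
/-!
Write `eᵢ = xᵢ - x*`. Differentiating, `V̇ = Σᵢ ⟪eᵢ, f xᵢ + gᵢ - ẋ*⟫`. Since `Σᵢ eᵢ = 0`, the inner
products of the `eᵢ` with any common vector sum to zero, so `ẋ*` may be replaced by `f x*`; the
one-sided Lipschitz condition then bounds `Σᵢ ⟪eᵢ, f xᵢ - f x*⟫` by `δ Σᵢ ‖eᵢ‖² = 2δV`.
-/

open Finset
open scoped RealInnerProductSpace

theorem Finset.sum_sub_average_eq_zero {ι E : Type*} [AddCommGroup E] [Module ℝ E]
    (s : Finset ι) (v : ι → E) :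
    ∑ i ∈ s, (v i - (#s : ℝ)⁻¹ • ∑ j ∈ s, v j) = 0 := by
  rcases s.eq_empty_or_nonempty with rfl | hs
  · simp
  · rw [sum_sub_distrib, sum_const, ← Nat.cast_smul_eq_nsmul ℝ, smul_smul,
      mul_inv_cancel₀ (by simpa using hs.ne_empty), one_smul, sub_self]

section

variable {ι E : Type*} [Fintype ι] [NormedAddCommGroup E] [InnerProductSpace ℝ E]

theorem HasDerivAt.half_sum_norm_sq {e : ι → ℝ → E} {e' : ι → E} {t : ℝ}
    (he : ∀ i, HasDerivAt (e i) (e' i) t) :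
    HasDerivAt (fun s => (1 / 2) * ∑ i, ‖e i s‖ ^ 2) (∑ i, ⟪e i t, e' i⟫) t := by
  refine ((HasDerivAt.fun_sum fun i _ => (he i).norm_sq).const_mul (1 / 2 : ℝ)).congr_deriv ?_
  rw [mul_sum]
  exact sum_congr rfl fun i _ => by ring

theorem sum_inner_sub_centroid_le {f : E → E} {δ : ℝ}
    (hf : ∀ u v, ⟪u - v, f u - f v⟫ ≤ δ * ⟪u - v, u - v⟫)
    (y : ι → E) {m : E} (hm : ∑ i, (y i - m) = 0) (c : E) :
    ∑ i, ⟪y i - m, f (y i) - c⟫ ≤ δ * ∑ i, ‖y i - m‖ ^ 2 := by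
  have hshift : ∑ i, ⟪y i - m, f m - c⟫ = 0 := by
    rw [← sum_inner, hm, inner_zero_left]
  calc ∑ i, ⟪y i - m, f (y i) - c⟫
      = ∑ i, ⟪y i - m, f (y i) - f m⟫ + ∑ i, ⟪y i - m, f m - c⟫ := by
        rw [← sum_add_distrib]
        refine sum_congr rfl fun i _ => ?_
        rw [← inner_add_right, sub_add_sub_cancel]
    _ ≤ ∑ i, δ * ⟪y i - m, y i - m⟫ := by
        rw [hshift, add_zero]
        exact sum_le_sum fun i _ => hf (y i) m
    _ = δ * ∑ i, ‖y i - m‖ ^ 2 := by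
        simp only [mul_sum, real_inner_self_eq_norm_sq]

end

theorem drift_estimate_general
    (N n : ℕ)
    (f : EuclideanSpace ℝ (Fin n) → EuclideanSpace ℝ (Fin n))
    (δ : ℝ)
    (hquad : ∀ u v : EuclideanSpace ℝ (Fin n),
      (inner ℝ (u - v) (f u - f v) : ℝ) ≤ δ * (inner ℝ (u - v) (u - v) : ℝ))
    (x : Fin N → ℝ → EuclideanSpace ℝ (Fin n))
    (g : Fin N → ℝ → EuclideanSpace ℝ (Fin n))
    (hode : ∀ t ≥ (0:ℝ), ∀ i, HasDerivAt (x i) (f (x i t) + g i t) t)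
    (xstar : ℝ → EuclideanSpace ℝ (Fin n))
    (hxstar : ∀ t, xstar t = (N : ℝ)⁻¹ • ∑ i, x i t)
    (V : ℝ → ℝ)
    (hV : ∀ t, V t = (1 / 2) * ∑ i, ‖x i t - xstar t‖ ^ 2) :
    ∀ t ≥ (0:ℝ),
      deriv V t ≤ 2 * δ * V t + ∑ i, (inner ℝ (x i t - xstar t) (g i t) : ℝ) := by
  intro t ht
  have hcentroid : ∑ i, (x i t - xstar t) = 0 := by
    simpa [hxstar] using sum_sub_average_eq_zero univ (x · t)
  set c := (N : ℝ)⁻¹ • ∑ i, (f (x i t) + g i t)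
  have hxstar' : HasDerivAt xstar c t := by
    rw [funext hxstar]
    exact (HasDerivAt.fun_sum (u := univ) fun i _ => hode t ht i).const_smul (N : ℝ)⁻¹
  have hV' : HasDerivAt V (∑ i, ⟪x i t - xstar t, f (x i t) + g i t - c⟫) t := by
    rw [funext hV]
    exact HasDerivAt.half_sum_norm_sq fun i => (hode t ht i).sub hxstar'
  calc deriv V t
      = ∑ i, ⟪x i t - xstar t, f (x i t) - c⟫ + ∑ i, ⟪x i t - xstar t, g i t⟫ := by
        rw [hV'.deriv, ← sum_add_distrib]
        refine sum_congr rfl fun i _ => ?_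
        rw [← inner_add_right, sub_add_eq_add_sub]
    _ ≤ δ * ∑ i, ‖x i t - xstar t‖ ^ 2 + ∑ i, ⟪x i t - xstar t, g i t⟫ := by
        gcongr
        exact sum_inner_sub_centroid_le hquad (x · t) hcentroid c
    _ = 2 * δ * V t + ∑ i, ⟪x i t - xstar t, g i t⟫ := by
        rw [hV]
        ring

theorem drift_estimate
    (N n : ℕ) (hN : 0 < N)
    (f : EuclideanSpace ℝ (Fin n) → EuclideanSpace ℝ (Fin n))
    (δ : ℝ) (hδ : 0 < δ)
    (hquad : ∀ u v : EuclideanSpace ℝ (Fin n),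
      (inner ℝ (u - v) (f u - f v) : ℝ) ≤ δ * (inner ℝ (u - v) (u - v) : ℝ))
    (x : Fin N → ℝ → EuclideanSpace ℝ (Fin n))
    (g : Fin N → ℝ → EuclideanSpace ℝ (Fin n))
    (hg : ∀ t : ℝ, ∑ i, g i t = 0)
    (hode : ∀ t ≥ (0:ℝ), ∀ i, HasDerivAt (x i) (f (x i t) + g i t) t)
    (xstar : ℝ → EuclideanSpace ℝ (Fin n))
    (hxstar : ∀ t, xstar t = (N : ℝ)⁻¹ • ∑ i, x i t)
    (V : ℝ → ℝ)
    (hV : ∀ t, V t = (1 / 2) * ∑ i, ‖x i t - xstar t‖ ^ 2) :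
    ∀ t ≥ (0:ℝ),
      deriv V t ≤ 2 * δ * V t + ∑ i, (inner ℝ (x i t - xstar t) (g i t) : ℝ) :=
  drift_estimate_general N n f δ hquad x g hode xstar hxstar V hV
end
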